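/- Let Θ^{(1)}, …, Θ^{(B)} be random elements of Ω^M defined on a common probability space, each distributed according to the probability measure with density π with respect to μ^M (they need not be independent). For any h : Ω → ℝ with h·f μ-integrable and with the weighted summand Σ_m w_m(Θ^{(b)}) h(θ_m^{(b)}) integrable for each b, the GMSS estimator is unbiased: E[(1/B) Σ_{b=1}^B Σ_{m=1}^M w_m(Θ^{(b)}) h(θ_m^{(b)})] = ∫_Ω h(θ) f(θ) dμ(θ). -/

import Mathlib

open MeasureTheory

/-! Against the law of one draw, the weights turn back into the mixture components:
`π · w_m = f(θ_m) ∏_{l ≠ m} g_l(θ_l) / M` wherever `π > 0`, and both sides vanish where `π = 0`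
since the summands of `π` are nonnegative. By Fubini, the `m`-th component integrated against
`h(θ_m)` gives `∫ h f` because each `g_l` integrates to `1`; so every draw, and hence the
average, has expectation `∫ h f`. -/

lemma Finset.prod_apply_update_eq_mul_prod_erase {ι β R : Type*} [Fintype ι] [DecidableEq ι]
    [CommMonoid R] (F : ι → β → R) (g : ι → β) (m : ι) (b : β) :
    ∏ l, F l (Function.update g m b l) = F m b * ∏ l ∈ univ.erase m, F l (g l) := by
  rw [← mul_prod_erase _ _ (mem_univ m), Function.update_self]
  congr 1
  exact prod_congr rfl fun l hl => by rw [Function.update_of_ne (ne_of_mem_erase hl)]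

lemma mul_prod_erase_eq_prod_update {ι Ω R : Type*} [Fintype ι] [DecidableEq ι] [CommMonoid R]
    (φ : Ω → R) (g : ι → Ω → R) (m : ι) :
    (fun t : ι → Ω => φ (t m) * ∏ l ∈ Finset.univ.erase m, g l (t l))
      = fun t => ∏ l, Function.update g m φ l (t l) :=
  funext fun t => (Finset.prod_apply_update_eq_mul_prod_erase (fun l v => v (t l)) g m φ).symm

section ProductIntegrals

variable {ι Ω 𝕜 : Type*} [Fintype ι] [DecidableEq ι] [MeasurableSpace Ω] [RCLike 𝕜]
  {μ : Measure Ω} [SigmaFinite μ]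

lemma integrable_pi_mul_prod_erase {φ : Ω → 𝕜} {g : ι → Ω → 𝕜} (hφ : Integrable φ μ)
    (hg : ∀ l, Integrable (g l) μ) (m : ι) :
    Integrable (fun t : ι → Ω => φ (t m) * ∏ l ∈ Finset.univ.erase m, g l (t l))
      (Measure.pi fun _ => μ) := by
  rw [mul_prod_erase_eq_prod_update]
  refine Integrable.fintype_prod fun l => ?_
  rcases eq_or_ne l m with rfl | hl
  · simpa using hφ
  · simpa [hl] using hg l

lemma integral_pi_mul_prod_erase (φ : Ω → 𝕜) (g : ι → Ω → 𝕜) (m : ι) :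
    ∫ t : ι → Ω, φ (t m) * ∏ l ∈ Finset.univ.erase m, g l (t l) ∂(Measure.pi fun _ => μ)
      = (∫ x, φ x ∂μ) * ∏ l ∈ Finset.univ.erase m, ∫ x, g l x ∂μ := by
  rw [mul_prod_erase_eq_prod_update, integral_fintype_prod_eq_prod]
  exact Finset.prod_apply_update_eq_mul_prod_erase (fun _ v => ∫ x, v x ∂μ) g m φ

end ProductIntegrals

lemma sum_mul_sum_div_sum_mul {ι : Type*} (s : Finset ι) {a w : ι → ℝ} (c : ι → ℝ)
    (ha : ∀ i ∈ s, 0 ≤ a i) (hw : ∑ i ∈ s, a i ≠ 0 → ∀ i ∈ s, w i = a i / ∑ j ∈ s, a j) :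
    (∑ i ∈ s, a i) * ∑ i ∈ s, w i * c i = ∑ i ∈ s, a i * c i := by
  by_cases hs : ∑ i ∈ s, a i = 0
  · rw [hs, zero_mul, eq_comm]
    refine Finset.sum_eq_zero fun i hi => ?_
    rw [(Finset.sum_eq_zero_iff_of_nonneg ha).1 hs i hi, zero_mul]
  · rw [Finset.mul_sum]
    refine Finset.sum_congr rfl fun i hi => ?_
    rw [hw hs i hi]
    field_simp

section MultisetSampling

variable {Ω : Type*} {M : ℕ}

-- `msDensity f g` is the density `π`; `msTerm f g m` is its `m`-th summand, without the `1 / M`.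
def msTerm (f : Ω → ℝ) (g : Fin M → Ω → ℝ) (m : Fin M) (Θ : Fin M → Ω) : ℝ :=
  f (Θ m) * ∏ l ∈ Finset.univ.erase m, g l (Θ l)

noncomputable def msDensity (f : Ω → ℝ) (g : Fin M → Ω → ℝ) (Θ : Fin M → Ω) : ℝ :=
  (1 / (M : ℝ)) * ∑ m, msTerm f g m Θ

variable {f : Ω → ℝ} {g : Fin M → Ω → ℝ}

lemma msTerm_nonneg (hf : ∀ x, 0 ≤ f x) (hg : ∀ l x, 0 ≤ g l x) (m : Fin M) (Θ : Fin M → Ω) :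
    0 ≤ msTerm f g m Θ :=
  mul_nonneg (hf _) (Finset.prod_nonneg fun l _ => hg l _)

lemma msDensity_nonneg (hf : ∀ x, 0 ≤ f x) (hg : ∀ l x, 0 ≤ g l x) (Θ : Fin M → Ω) :
    0 ≤ msDensity f g Θ :=
  mul_nonneg (by positivity) (Finset.sum_nonneg fun m _ => msTerm_nonneg hf hg m Θ)

lemma msDensity_mul_sum_weight_mul (hM : 0 < M) (hf : ∀ x, 0 ≤ f x) (hg : ∀ l x, 0 ≤ g l x)
    {w : Fin M → (Fin M → Ω) → ℝ} (Θ : Fin M → Ω)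
    (hw : ∀ m, msDensity f g Θ ≠ 0 → w m Θ = msTerm f g m Θ / ((M : ℝ) * msDensity f g Θ))
    (c : Fin M → ℝ) :
    msDensity f g Θ * ∑ m, w m Θ * c m = (1 / (M : ℝ)) * ∑ m, msTerm f g m Θ * c m := by
  have hM' : (M : ℝ) ≠ 0 := by positivity
  have hsum : (M : ℝ) * msDensity f g Θ = ∑ m, msTerm f g m Θ := by
    rw [msDensity]; field_simp
  rw [← sum_mul_sum_div_sum_mul _ c (fun m _ => msTerm_nonneg hf hg m Θ), ← hsum]
  · field_simp
  · intro hne m _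
    rw [← hsum] at hne ⊢
    exact hw m (right_ne_zero_of_mul hne)

variable [MeasurableSpace Ω]

lemma measurable_msDensity (hf : Measurable f) (hg : ∀ l, Measurable (g l)) :
    Measurable (msDensity f g) := by
  unfold msDensity msTerm
  fun_prop

variable {μ : Measure Ω}

lemma aestronglyMeasurable_sum_weight_mul (hf : Measurable f) (hg : ∀ l, Measurable (g l))
    {w : Fin M → (Fin M → Ω) → ℝ}
    (hw : ∀ m Θ, msDensity f g Θ ≠ 0 → w m Θ = msTerm f g m Θ / ((M : ℝ) * msDensity f g Θ))
    {h : Ω → ℝ} (hh : Measurable h) :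
    AEStronglyMeasurable (fun Θ => ∑ m, w m Θ * h (Θ m))
      ((Measure.pi fun _ => μ).withDensity fun Θ => ENNReal.ofReal (msDensity f g Θ)) := by
  have hmeas : Measurable fun Θ : Fin M → Ω =>
      ∑ m, msTerm f g m Θ / ((M : ℝ) * msDensity f g Θ) * h (Θ m) := by
    have := measurable_msDensity hf hg
    unfold msTerm
    fun_prop
  -- `w` is only prescribed where `π ≠ 0`, which carries the whole law.
  refine hmeas.aestronglyMeasurable.congr ?_
  rw [Filter.EventuallyEq, ae_withDensity_iff (measurable_msDensity hf hg).ennreal_ofReal]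
  refine ae_of_all _ fun Θ hΘ => Finset.sum_congr rfl fun m _ => ?_
  rw [hw m Θ (ENNReal.ofReal_pos.1 (pos_iff_ne_zero.2 hΘ)).ne']

variable [SigmaFinite μ]

lemma integral_msTerm_mul (hg : ∀ l, ∫ x, g l x ∂μ = 1) (h : Ω → ℝ) (m : Fin M) :
    ∫ Θ, msTerm f g m Θ * h (Θ m) ∂(Measure.pi fun _ => μ) = ∫ x, h x * f x ∂μ := by
  have hfubini := integral_pi_mul_prod_erase (μ := μ) (fun x => h x * f x) g m
  simp only [hg, Finset.prod_const_one, mul_one] at hfubini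
  rw [← hfubini]
  congr 1 with Θ
  rw [msTerm]; ring

lemma integrable_msTerm_mul (hg : ∀ l, ∫ x, g l x ∂μ = 1) {h : Ω → ℝ}
    (hhf : Integrable (fun x => h x * f x) μ) (m : Fin M) :
    Integrable (fun Θ => msTerm f g m Θ * h (Θ m)) (Measure.pi fun _ => μ) := by
  have hg_int : ∀ l, Integrable (g l) μ := fun l =>
    Integrable.of_integral_ne_zero (by rw [hg l]; exact one_ne_zero)
  refine (integrable_pi_mul_prod_erase hhf hg_int m).congr (ae_of_all _ fun Θ => ?_)
  simp only [msTerm]; ring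

lemma integral_sum_weight_mul_withDensity (hM : 0 < M) (hf_meas : Measurable f)
    (hf : ∀ x, 0 ≤ f x) (hg_meas : ∀ l, Measurable (g l)) (hg : ∀ l x, 0 ≤ g l x)
    (hg_prob : ∀ l, ∫ x, g l x ∂μ = 1) {w : Fin M → (Fin M → Ω) → ℝ}
    (hw : ∀ m Θ, msDensity f g Θ ≠ 0 → w m Θ = msTerm f g m Θ / ((M : ℝ) * msDensity f g Θ))
    {h : Ω → ℝ} (hhf : Integrable (fun x => h x * f x) μ) :
    ∫ Θ, ∑ m, w m Θ * h (Θ m)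
        ∂((Measure.pi fun _ => μ).withDensity fun Θ => ENNReal.ofReal (msDensity f g Θ))
      = ∫ x, h x * f x ∂μ := by
  rw [integral_withDensity_eq_integral_toReal_smul
    (measurable_msDensity hf_meas hg_meas).ennreal_ofReal
    (ae_of_all _ fun _ => ENNReal.ofReal_lt_top)]
  calc _ = ∫ Θ, (1 / (M : ℝ)) * ∑ m, msTerm f g m Θ * h (Θ m) ∂(Measure.pi fun _ => μ) := by
        congr 1 with Θ
        rw [ENNReal.toReal_ofReal (msDensity_nonneg hf hg Θ), smul_eq_mul,
          msDensity_mul_sum_weight_mul hM hf hg Θ (fun m => hw m Θ)]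
    _ = (1 / (M : ℝ)) * ∑ _m : Fin M, ∫ x, h x * f x ∂μ := by
        rw [integral_const_mul,
          integral_finsetSum _ fun m _ => integrable_msTerm_mul hg_prob hhf m]
        simp_rw [integral_msTerm_mul hg_prob]
    _ = ∫ x, h x * f x ∂μ := by
        rw [Fin.sum_const, nsmul_eq_mul]
        field_simp

end MultisetSampling

theorem gmss_estimator_unbiased_general
    {Ω : Type*} [MeasurableSpace Ω] (μ : Measure Ω) [SigmaFinite μ]
    {α : Type*} [MeasurableSpace α] (P : Measure α)
    (M B : ℕ) (hM : 0 < M) (hB : 0 < B)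
    (f : Ω → ℝ) (g : Fin M → Ω → ℝ)
    (hf_meas : Measurable f) (hf_nonneg : ∀ x, 0 ≤ f x)
    (hg_meas : ∀ l, Measurable (g l)) (hg_nonneg : ∀ l x, 0 ≤ g l x)
    (hg_prob : ∀ l, ∫ x, g l x ∂μ = 1)
    (π : (Fin M → Ω) → ℝ)
    (hπ : ∀ Θ, π Θ = (1 / (M : ℝ)) *
      ∑ m : Fin M, f (Θ m) * ∏ l ∈ Finset.univ.erase m, g l (Θ l))
    (w : Fin M → (Fin M → Ω) → ℝ)
    (hw : ∀ m Θ, π Θ ≠ 0 →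
      w m Θ = f (Θ m) * (∏ l ∈ Finset.univ.erase m, g l (Θ l)) / ((M : ℝ) * π Θ))
    (Θ : Fin B → α → (Fin M → Ω))
    (hΘ_meas : ∀ b, Measurable (Θ b))
    (hΘ_law : ∀ b, Measure.map (Θ b) P =
      (Measure.pi fun _ : Fin M => μ).withDensity fun t => ENNReal.ofReal (π t))
    (h : Ω → ℝ) (hh_meas : Measurable h)
    (hhf_int : Integrable (fun θ => h θ * f θ) μ)
    (h_int : ∀ b, Integrable (fun a => ∑ m : Fin M, w m (Θ b a) * h (Θ b a m)) P) :
    ∫ a, (1 / (B : ℝ)) * ∑ b : Fin B, ∑ m : Fin M, w m (Θ b a) * h (Θ b a m) ∂P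
      = ∫ θ, h θ * f θ ∂μ := by
  obtain rfl : π = msDensity f g := funext hπ
  have one_draw (b : Fin B) :
      ∫ a, ∑ m : Fin M, w m (Θ b a) * h (Θ b a m) ∂P = ∫ θ, h θ * f θ ∂μ := by
    have hF := aestronglyMeasurable_sum_weight_mul hf_meas hg_meas hw hh_meas (μ := μ)
    rw [← hΘ_law b] at hF
    rw [← integral_map (hΘ_meas b).aemeasurable hF, hΘ_law b]
    exact integral_sum_weight_mul_withDensity hM hf_meas hf_nonneg hg_meas hg_nonneg hg_prob hw
      hhf_int
  rw [integral_const_mul, integral_finsetSum _ fun b _ => h_int b,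
    Finset.sum_congr rfl fun b _ => one_draw b, Fin.sum_const, nsmul_eq_mul]
  field_simp

/-- Unbiasedness of the GMSS estimator: if each draw `Θ^(b)` is distributed
according to the multiset sampling density `π` (not necessarily independently),
then the importance-weighted average is an unbiased estimator of `∫ h f dμ`. -/
theorem gmss_estimator_unbiased
    {Ω : Type*} [MeasurableSpace Ω] (μ : Measure Ω) [SigmaFinite μ]
    {α : Type*} [MeasurableSpace α] (P : Measure α) [IsProbabilityMeasure P]
    (M B : ℕ) (hM : 0 < M) (hB : 0 < B)
    (f : Ω → ℝ) (g : Fin M → Ω → ℝ)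
    (hf_meas : Measurable f) (hf_nonneg : ∀ x, 0 ≤ f x)
    (hf_prob : ∫ x, f x ∂μ = 1)
    (hg_meas : ∀ l, Measurable (g l)) (hg_nonneg : ∀ l x, 0 ≤ g l x)
    (hg_prob : ∀ l, ∫ x, g l x ∂μ = 1)
    (π : (Fin M → Ω) → ℝ)
    (hπ : ∀ Θ, π Θ = (1 / (M : ℝ)) *
      ∑ m : Fin M, f (Θ m) * ∏ l ∈ Finset.univ.erase m, g l (Θ l))
    (w : Fin M → (Fin M → Ω) → ℝ)
    (hw : ∀ m Θ, π Θ ≠ 0 →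
      w m Θ = f (Θ m) * (∏ l ∈ Finset.univ.erase m, g l (Θ l)) / ((M : ℝ) * π Θ))
    (hw0 : ∀ m Θ, π Θ = 0 → w m Θ = 0)
    (Θ : Fin B → α → (Fin M → Ω))
    (hΘ_meas : ∀ b, Measurable (Θ b))
    (hΘ_law : ∀ b, Measure.map (Θ b) P =
      (Measure.pi fun _ : Fin M => μ).withDensity fun t => ENNReal.ofReal (π t))
    (h : Ω → ℝ) (hh_meas : Measurable h)
    (hhf_int : Integrable (fun θ => h θ * f θ) μ)
    (h_int : ∀ b, Integrable (fun a => ∑ m : Fin M, w m (Θ b a) * h (Θ b a m)) P) :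
    ∫ a, (1 / (B : ℝ)) * ∑ b : Fin B, ∑ m : Fin M, w m (Θ b a) * h (Θ b a m) ∂P
      = ∫ θ, h θ * f θ ∂μ :=
  gmss_estimator_unbiased_general μ P M B hM hB f g hf_meas hf_nonneg hg_meas hg_nonneg hg_prob π hπ
    w hw Θ hΘ_meas hΘ_law h hh_meas hhf_int h_int
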